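/- arXiv:2109.04055 — 5 statements merged into one kernel-verified Lean document; each statement's English description precedes it below -/
import Mathlib

section
/- For any equivalence relation R on ℕ, the function f(x) = the least y ≤ x with y R x is a reduction of R to R_{complement of T_R}, where T_R = {y ≠ 0 : ∀ x < y, ¬(x R y)} is the principal transversal; consequently if R is a primitive recursive equivalence relation with domain ℕ, then R is pr-bireducible with R_{complement of T_R}. -/
/-- The equivalence relation `R_X`: `x R_X y` iff both in `X` or `x = y`. -/
def REq (X : Set ℕ) (x y : ℕ) : Prop := (x ∈ X ∧ y ∈ X) ∨ x = y

/-- Primitive recursive reducibility between binary relations on ℕ. -/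
def PrRed (R S : ℕ → ℕ → Prop) : Prop :=
  ∃ f : ℕ → ℕ, Primrec f ∧ ∀ x y, R x y ↔ S (f x) (f y)

/-- pr-bireducibility. -/
def PrEquiv (R S : ℕ → ℕ → Prop) : Prop := PrRed R S ∧ PrRed S R

/-- `X` is a primitive recursive set. -/
def PRSet (X : Set ℕ) : Prop :=
  ∃ f : ℕ → Bool, Primrec f ∧ ∀ n, n ∈ X ↔ f n = true

/-- `#(0^X)[s]`: the number of elements of the complement of `X` that are `≤ s`. -/
noncomputable def zc (X : Set ℕ) (s : ℕ) : ℕ := {k | k ≤ s ∧ k ∉ X}.ncard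

/-- The principal transversal of `R`. -/
def princT (R : ℕ → ℕ → Prop) : Set ℕ := {y | y ≠ 0 ∧ ∀ x < y, ¬ R x y}

/-!
Send each `x` to the least element of its `R`-class. Least elements of classes are
`R`-related only when equal, and the least element of a class lies outside `T_R` exactly when
it is `0`, the least element of the class of `0`; so `R x y` iff the least elements are both
outside `T_R` or equal. If `R` is primitive recursive, the least element is found by bounded
search below `x`, and conversely `x ↦ (x if x is least in its class, else 0)` reduces
`R_{T_Rᶜ}` to `R`.
-/

theorem Primrec.nat_sInf_setOf {g : ℕ → ℕ → Bool} (hg : Primrec₂ g) (hself : ∀ x, g x x = true) :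
    Primrec fun x => sInf {z | g z x = true} := by
  refine (Primrec.list_findIdx (Primrec.list_range.comp Primrec.succ) hg.swap).of_eq fun x => ?_
  have hne : {z | g z x = true}.Nonempty := ⟨x, hself x⟩
  have hlt : sInf {z | g z x = true} < (List.range (x + 1)).length := by
    simpa [Nat.lt_succ_iff] using Nat.sInf_le (hself x)
  refine (List.findIdx_eq hlt).2 ⟨?_, fun j hj => ?_⟩
  · simpa using Nat.sInf_mem hne
  · simpa using Nat.notMem_of_lt_sInf hj

namespace Equivalence

variable {R : ℕ → ℕ → Prop} (hR : Equivalence R)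
include hR

theorem rel_sInf_setOf (x : ℕ) : R (sInf {z | R z x}) x :=
  Nat.sInf_mem (s := {z | R z x}) ⟨x, hR.refl x⟩

theorem sInf_setOf_congr {x y : ℕ} (h : R x y) : sInf {z | R z x} = sInf {z | R z y} := by
  congr 1
  ext z
  exact ⟨fun hz => hR.trans hz h, fun hz => hR.trans hz (hR.symm h)⟩

theorem rel_iff_sInf_setOf_eq {x y : ℕ} : R x y ↔ sInf {z | R z x} = sInf {z | R z y} :=
  ⟨hR.sInf_setOf_congr, fun h =>
    hR.trans (hR.symm (hR.rel_sInf_setOf x)) (h ▸ hR.rel_sInf_setOf y)⟩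

theorem sInf_setOf_eq_self_iff {x : ℕ} : sInf {z | R z x} = x ↔ ∀ w < x, ¬ R w x := by
  refine ⟨fun h w hw hwx => ?_, fun h => le_antisymm (Nat.sInf_le (hR.refl x)) ?_⟩
  · exact Nat.notMem_of_lt_sInf (s := {z | R z x}) (by rwa [h]) hwx
  · exact not_lt.1 fun hlt => h _ hlt (hR.rel_sInf_setOf x)

theorem sInf_setOf_sInf_setOf (x : ℕ) : sInf {z | R z (sInf {z | R z x})} = sInf {z | R z x} :=
  hR.sInf_setOf_congr (hR.rel_sInf_setOf x)

theorem mem_princT_iff {x : ℕ} : x ∈ princT R ↔ x ≠ 0 ∧ sInf {z | R z x} = x := by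
  rw [hR.sInf_setOf_eq_self_iff]
  rfl

theorem eq_of_rel_of_minimal {a b : ℕ} (ha : ∀ w < a, ¬ R w a) (hb : ∀ w < b, ¬ R w b)
    (h : R a b) : a = b := by
  rw [← hR.sInf_setOf_eq_self_iff] at ha hb
  rw [← ha, ← hb, hR.sInf_setOf_congr h]

theorem rel_iff_REq_compl_princT (x y : ℕ) :
    R x y ↔ REq (princT R)ᶜ (sInf {z | R z x}) (sInf {z | R z y}) := by
  have hcompl : ∀ x, sInf {z | R z x} ∈ (princT R)ᶜ ↔ sInf {z | R z x} = 0 := fun x => by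
    simp only [Set.mem_compl_iff, hR.mem_princT_iff, hR.sInf_setOf_sInf_setOf, and_true, not_not]
  rw [hR.rel_iff_sInf_setOf_eq, REq, hcompl, hcompl]
  grind

theorem rel_ite_iff (x y : ℕ) :
    R (if sInf {z | R z x} = x then x else 0) (if sInf {z | R z y} = y then y else 0) ↔
      REq (princT R)ᶜ x y := by
  have hmin : ∀ x, ∀ w < (if sInf {z | R z x} = x then x else 0),
      ¬ R w (if sInf {z | R z x} = x then x else 0) := fun x => by
    split_ifs with h
    · exact hR.sInf_setOf_eq_self_iff.1 h
    · simp
  rw [show R _ _ ↔ _ from ⟨hR.eq_of_rel_of_minimal (hmin x) (hmin y), fun h => h ▸ hR.refl _⟩]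
  simp only [REq, Set.mem_compl_iff, hR.mem_princT_iff]
  split_ifs <;> grind

end Equivalence

theorem stmt_0 (R : ℕ → ℕ → Prop) (hR : Equivalence R) :
    (∀ x y, R x y ↔ REq ((princT R)ᶜ) (sInf {z | R z x}) (sInf {z | R z y})) ∧
    ((∃ g : ℕ → ℕ → Bool, Primrec₂ g ∧ ∀ x y, R x y ↔ g x y = true) →
      PrEquiv R (REq ((princT R)ᶜ))) := by
  refine ⟨hR.rel_iff_REq_compl_princT, ?_⟩
  rintro ⟨g, hg, hgR⟩
  have hleast : Primrec fun x => sInf {z | R z x} := by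
    have hsets : ∀ x, {z | g z x = true} = {z | R z x} := fun x =>
      Set.ext fun z => (hgR z x).symm
    simpa only [hsets] using Primrec.nat_sInf_setOf hg fun x => (hgR x x).1 (hR.refl x)
  refine ⟨⟨_, hleast, hR.rel_iff_REq_compl_princT⟩, ⟨_, ?_, fun x y => (hR.rel_ite_iff x y).symm⟩⟩
  exact Primrec.ite (Primrec.eq.comp hleast .id) .id (.const 0)
end

section
/- For any set X ⊆ ℕ with infinite complement, Id ≤_pr R_X if and only if the complement of X is not primitive recursively immune, i.e., if and only if the complement of X contains the range of an injective primitive recursive function. -/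
/-!
A reduction `f` of equality to `R_X` is injective, and since all elements of `X` are
`R_X`-equivalent, at most one point is mapped into `X`. Skipping that point yields an injective
primitive recursive enumeration of a subset of the complement. Conversely, an injective map into
the complement of `X` is itself a reduction, as `R_X` is equality off `X`.
-/

def Nat.skip (a n : ℕ) : ℕ := if a ≤ n then n + 1 else n

theorem Nat.primrec_skip (a : ℕ) : Primrec (Nat.skip a) :=
  _root_.Primrec.ite (_root_.Primrec.nat_le.comp (_root_.Primrec.const a) _root_.Primrec.id)
    _root_.Primrec.succ _root_.Primrec.id

theorem Nat.skip_injective (a : ℕ) : Function.Injective (Nat.skip a) := by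
  intro x y hxy
  unfold Nat.skip at hxy
  split_ifs at hxy <;> omega

theorem Nat.skip_ne (a n : ℕ) : Nat.skip a n ≠ a := by
  unfold Nat.skip
  split_ifs <;> omega

section Reduction

variable {X : Set ℕ} {f : ℕ → ℕ}

theorem REq.injective_of_reduces (hf : ∀ x y, x = y ↔ REq X (f x) (f y)) :
    Function.Injective f :=
  fun x y hxy => (hf x y).2 (Or.inr hxy)

theorem REq.eq_of_reduces_of_mem (hf : ∀ x y, x = y ↔ REq X (f x) (f y)) {a b : ℕ}
    (ha : f a ∈ X) (hb : f b ∈ X) : a = b :=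
  (hf a b).2 (Or.inl ⟨ha, hb⟩)

theorem REq.reduces_of_injective (hinj : Function.Injective f) (hrange : Set.range f ⊆ Xᶜ)
    (x y : ℕ) : x = y ↔ REq X (f x) (f y) := by
  refine ⟨fun hxy => Or.inr (congrArg f hxy), ?_⟩
  rintro (⟨hx, -⟩ | hxy)
  · exact absurd hx (hrange ⟨x, rfl⟩)
  · exact hinj hxy

theorem REq.exists_injective_into_compl_of_reduces (hfpr : Primrec f)
    (hf : ∀ x y, x = y ↔ REq X (f x) (f y)) :
    ∃ g : ℕ → ℕ, Primrec g ∧ Function.Injective g ∧ Set.range g ⊆ Xᶜ := by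
  have hinj := REq.injective_of_reduces hf
  by_cases hX : ∃ a, f a ∈ X
  · obtain ⟨a, ha⟩ := hX
    refine ⟨f ∘ Nat.skip a, hfpr.comp (Nat.primrec_skip a),
      hinj.comp (Nat.skip_injective a), ?_⟩
    rintro _ ⟨n, rfl⟩ hn
    exact Nat.skip_ne a n (REq.eq_of_reduces_of_mem hf hn ha)
  · simp only [not_exists] at hX
    exact ⟨f, hfpr, hinj, Set.range_subset_iff.2 hX⟩

end Reduction

theorem stmt_3_general (X : Set ℕ) :
    PrRed (fun a b : ℕ => a = b) (REq X) ↔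
      ∃ f : ℕ → ℕ, Primrec f ∧ Function.Injective f ∧ Set.range f ⊆ Xᶜ :=
  ⟨fun ⟨_, hfpr, hf⟩ => REq.exists_injective_into_compl_of_reduces hfpr hf,
    fun ⟨f, hfpr, hinj, hrange⟩ => ⟨f, hfpr, REq.reduces_of_injective hinj hrange⟩⟩

theorem stmt_3 (X : Set ℕ) (h : Xᶜ.Infinite) :
    PrRed (fun a b : ℕ => a = b) (REq X) ↔
      ∃ f : ℕ → ℕ, Primrec f ∧ Function.Injective f ∧ Set.range f ⊆ Xᶜ :=
  stmt_3_general X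
end

section
/- There exists a primitive recursive set Y ⊆ ℕ whose complement is infinite and primitive recursively immune, i.e., the complement of Y contains no infinite set which is the range of an injective primitive recursive function. -/
open Function Set

namespace Nat.Partrec.Code

def HaltsBelow (c : Code) (n k : ℕ) : Prop := ∃ x ∈ c.evaln k n, x < k

theorem haltsBelow_iff_getD_lt (c : Code) (n k : ℕ) :
    c.HaltsBelow n k ↔ (c.evaln k n).getD k < k := by
  unfold HaltsBelow
  cases c.evaln k n <;> simp

instance (c : Code) : DecidableRel c.HaltsBelow := fun n k =>
  decidable_of_iff _ (c.haltsBelow_iff_getD_lt n k).symm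

theorem primrecRel_haltsBelow (c : Code) : PrimrecRel c.HaltsBelow :=
  have hrun : Primrec₂ fun n k => c.evaln k n :=
    primrec_evaln.comp ((Primrec.snd.pair (.const c)).pair Primrec.fst)
  (Primrec.nat_lt.comp₂ (Primrec.option_getD.comp₂ hrun Primrec₂.right) Primrec₂.right).of_eq
    fun n k => (c.haltsBelow_iff_getD_lt n k).symm

theorem exists_haltsBelow {c : Code} {n x : ℕ} (h : x ∈ c.eval n) : ∃ k, c.HaltsBelow n k := by
  obtain ⟨k, hk⟩ := evaln_complete.mp h
  exact ⟨max k (x + 1), x, evaln_mono (le_max_left _ _) hk,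
    (lt_add_one x).trans_le (le_max_right _ _)⟩

section

variable {c : Code} {g : ℕ → ℕ} (hc : ∀ n, g n ∈ c.eval n)

def haltingBound (n : ℕ) : ℕ := Nat.find (exists_haltsBelow (hc n))

theorem lt_haltingBound (n : ℕ) : g n < haltingBound hc n := by
  obtain ⟨x, hx, hxk⟩ := Nat.find_spec (exists_haltsBelow (hc n))
  rwa [Part.mem_unique (evaln_sound hx) (hc n)] at hxk

theorem mem_range_haltingBound_iff {k : ℕ} :
    k ∈ range (haltingBound hc) ↔ ∃ n < k, c.HaltsBelow n k ∧ ∀ j < k, ¬ c.HaltsBelow n j := by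
  constructor
  · rintro ⟨n, rfl⟩
    obtain ⟨x, hx, -⟩ := Nat.find_spec (exists_haltsBelow (hc n))
    exact ⟨n, evaln_bound hx, Nat.find_spec _, fun j => Nat.find_min _⟩
  · rintro ⟨n, -, hk, hmin⟩
    exact ⟨n, (Nat.find_eq_iff _).mpr ⟨hk, hmin⟩⟩

theorem primrecPred_mem_range_haltingBound : PrimrecPred (· ∈ range (haltingBound hc)) := by
  have hfirst : PrimrecRel fun n k => c.HaltsBelow n k ∧ ∀ j < k, ¬ c.HaltsBelow n j :=
    c.primrecRel_haltsBelow.and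
      ((c.primrecRel_haltsBelow.swap.not.forall_lt).comp Primrec.snd Primrec.fst)
  exact (hfirst.exists_lt.comp .id .id).of_eq fun k =>
    (mem_range_haltingBound_iff hc (k := k)).symm

end

end Nat.Partrec.Code

theorem Function.Injective.exists_le_apply {ν : ℕ → ℕ} (hν : Injective ν) (k : ℕ) :
    ∃ i ≤ k, k ≤ ν i := by
  by_contra! h
  obtain ⟨i, hi, j, hj, hij, heq⟩ := Finset.exists_ne_map_eq_of_card_lt_of_maps_to
    (s := Finset.range (k + 1)) (t := Finset.range k) (f := ν) (by simp)
    (fun i hi => by simpa using h i (by simpa [Nat.lt_succ_iff] using hi))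
  exact hij (hν heq)

theorem Primrec.sum_range {f : ℕ → ℕ} (hf : Primrec f) :
    Primrec fun k => ∑ i ∈ Finset.range k, f i := by
  refine (Primrec.nat_rec₁ 0 (Primrec.nat_add.comp₂ Primrec₂.right (hf.comp₂ Primrec₂.left))).of_eq
    fun k => ?_
  induction k with
  | zero => rfl
  | succ k ih => rw [Finset.sum_range_succ, ← ih]

theorem not_primrec_of_range_subset_range {t f : ℕ → ℕ} (ht : ∀ n, ack n n ≤ t n)
    (hf : Injective f) (hsub : range f ⊆ range t) : ¬ Primrec f := by
  intro hfp
  choose ν hν using fun i => hsub (mem_range_self i)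
  have hνinj : Injective ν := fun i j h => hf (by rw [← hν i, ← hν j, h])
  obtain ⟨m, hm⟩ := exists_lt_ack_of_nat_primrec
    (Primrec.nat_iff.mp (hfp.sum_range.comp Primrec.succ))
  obtain ⟨i, hi, hmi⟩ := hνinj.exists_le_apply m
  refine (hm m).not_ge ?_
  calc ack m m ≤ ack (ν i) (ν i) := ack_le_ack hmi hmi
    _ ≤ t (ν i) := ht _
    _ = f i := hν i
    _ ≤ ∑ j ∈ Finset.range (m + 1), f j :=
      Finset.single_le_sum (fun _ _ => Nat.zero_le _) (Finset.mem_range.mpr (Nat.lt_succ_of_le hi))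

open Nat.Partrec.Code

theorem stmt_4 :
    ∃ Y : Set ℕ, PRSet Y ∧ Yᶜ.Infinite ∧
      ∀ f : ℕ → ℕ, Primrec f → Function.Injective f → ¬ (Set.range f ⊆ Yᶜ) := by
  obtain ⟨c, hc⟩ := exists_code.mp
    (Partrec.nat_iff.mp (computable₂_ack.comp .id .id : Computable fun n => ack n n))
  have hack : ∀ n, ack n n ∈ c.eval n := by simp [hc]
  set t := haltingBound hack
  refine ⟨(range t)ᶜ, ?_, ?_, ?_⟩
  · obtain ⟨_, ht⟩ := primrecPred_mem_range_haltingBound hack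
    exact ⟨fun n => !decide (n ∈ range t), Primrec.not.comp ht, fun n => by simp⟩
  · rw [compl_compl]
    exact infinite_of_forall_exists_gt fun n =>
      ⟨t n, mem_range_self n, (lt_ack_left n n).trans (lt_haltingBound hack n)⟩
  · intro f hf hinj hsub
    rw [compl_compl] at hsub
    exact not_primrec_of_range_subset_range
      (fun n => (lt_haltingBound hack n).le) hinj hsub hf
end

section
/- There exists a primitive recursive equivalence relation R on ℕ with infinitely many classes such that R <_pr Id, i.e., R ≤_pr Id but Id is not ≤_pr R. -/
/-!
Take `X` to be the complement of the diagonal Ackermann values `ack n n`. It is primitive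
recursive: `m = ack n n` forces `n < m`, and Ackermann capped at `m + 1` is primitive recursive
(the capped table can be computed row by row). Collapsing `X` to one point reduces `R_X` to
equality. Conversely, a reduction `f` of equality to `R_X` is injective and sends at most one point
into `X`. If `f < ack m` pointwise, it sends `0, …, m + 2` to distinct values below
`ack (m + 1) (m + 1)`, at least `m + 2` of them diagonal values, but only `ack 0 0, …, ack m m` lie
there.
-/

/-- Row `a` of the Ackermann table capped at `M`, listing `min (ack a b) M` for `b ≤ M`. Row `a + 1`
reads row `a` only at arguments `≤ M`, because `min (ack a (min b M)) M = min (ack a b) M`. -/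
def cappedAckRow (M a : ℕ) : List ℕ :=
  Nat.rec ((List.range (M + 1)).map fun b => min (b + 1) M)
    (fun _ row => (List.range (M + 1)).map fun b =>
      Nat.rec (row.getD (min 1 M) 0) (fun _ x => row.getD (min x M) 0) b) a

lemma getD_map_range_succ {α : Type*} (f : ℕ → α) (d : α) {M b : ℕ} (h : b ≤ M) :
    ((List.range (M + 1)).map f).getD b d = f b := by
  simp [List.getD_eq_getElem?_getD, List.getElem?_range (Nat.lt_succ_of_le h)]

lemma min_ack_min_right (a b M : ℕ) : min (ack a (min b M)) M = min (ack a b) M := by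
  rcases le_total b M with h | h
  · rw [min_eq_left h]
  · rw [min_eq_right h, min_eq_right (lt_ack_right a M).le,
      min_eq_right (h.trans (lt_ack_right a b).le)]

lemma cappedAckRow_getD {M a b : ℕ} (h : b ≤ M) :
    (cappedAckRow M a).getD b 0 = min (ack a b) M := by
  induction a generalizing b with
  | zero => exact (getD_map_range_succ _ _ h).trans (by rw [ack_zero])
  | succ a ih =>
    refine (getD_map_range_succ _ _ h).trans ?_
    clear h
    induction b with
    | zero => exact (ih (min_le_right _ _)).trans (by rw [min_ack_min_right, ack_succ_zero])
    | succ b ihb =>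
      refine (ih (min_le_right _ _)).trans ?_
      rw [ihb, min_ack_min_right, min_ack_min_right, ack_succ_succ]

theorem primrec₂_cappedAckRow : Primrec₂ cappedAckRow := by
  open Primrec in
  have row_zero : Primrec fun M => (List.range (M + 1)).map fun b => min (b + 1) M :=
    list_map (list_range.comp succ) (nat_min.comp₂ (succ.comp₂ Primrec₂.right) Primrec₂.left)
  have entry_succ : Primrec₂ fun (q : ℕ × ℕ × List ℕ) (b : ℕ) =>
      Nat.rec (motive := fun _ => ℕ) (q.2.2.getD (min 1 q.1) 0)
        (fun _ x => q.2.2.getD (min x q.1) 0) b :=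
    nat_rec ((list_getD 0).comp (snd.comp snd) (nat_min.comp (const 1) fst))
      ((list_getD 0).comp₂ ((snd.comp snd).comp₂ Primrec₂.left)
        (nat_min.comp₂ (snd.comp₂ Primrec₂.right) (fst.comp₂ Primrec₂.left)))
  exact (nat_rec row_zero (list_map ((list_range.comp succ).comp fst) entry_succ).to₂).of_eq
    fun _ _ => rfl

theorem primrec₂_min_ack : Primrec₂ fun (M : ℕ) (p : ℕ × ℕ) => min (ack p.1 p.2) M := by
  open Primrec in
  exact ((list_getD 0).comp (primrec₂_cappedAckRow.comp fst (fst.comp snd))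
    (nat_min.comp (snd.comp snd) fst)).of_eq
    fun p => (cappedAckRow_getD (min_le_right _ _)).trans (min_ack_min_right _ _ _)

lemma ack_diag_strictMono : StrictMono fun n => ack n n := fun _ _ h =>
  (ack_strictMono_right _ h).trans_le (ack_le_ack h.le le_rfl)

theorem primrecPred_mem_range_ack_diag : PrimrecPred (· ∈ Set.range fun n => ack n n) := by
  have hR : PrimrecRel fun n m => min (ack n n) (m + 1) = m :=
    Primrec.eq.comp₂ (primrec₂_min_ack.comp₂ (Primrec.succ.comp₂ Primrec₂.right)
      (Primrec₂.pair.comp₂ Primrec₂.left Primrec₂.left)) Primrec₂.right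
  refine (hR.exists_lt.comp Primrec.succ Primrec.id).of_eq fun m => ?_
  simp only [id, Set.mem_range]
  constructor
  · rintro ⟨n, -, hn⟩
    exact ⟨n, by omega⟩
  · rintro ⟨n, rfl⟩
    exact ⟨n, (lt_ack_left n n).trans (Nat.lt_succ_self _), by omega⟩

namespace REq

variable {X : Set ℕ}

theorem equivalence (X : Set ℕ) : Equivalence (REq X) where
  refl _ := Or.inr rfl
  symm := by
    rintro x y (⟨hx, hy⟩ | rfl)
    exacts [Or.inl ⟨hy, hx⟩, Or.inr rfl]
  trans := by
    rintro x y z (⟨hx, hy⟩ | rfl) (⟨hy', hz⟩ | rfl)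
    exacts [Or.inl ⟨hx, hz⟩, Or.inl ⟨hx, hy⟩, Or.inl ⟨hy', hz⟩, Or.inr rfl]

theorem primrecRel (hX : PrimrecPred (· ∈ X)) : PrimrecRel (REq X) :=
  ((hX.comp Primrec.fst).and (hX.comp Primrec.snd)).or Primrec.eq

theorem prRed_eq (hX : PrimrecPred (· ∈ X)) : PrRed (REq X) (· = ·) := by
  classical
  refine ⟨fun x => if x ∈ X then 0 else x + 1, Primrec.ite hX (Primrec.const 0) Primrec.succ,
    fun x y => ?_⟩
  by_cases hx : x ∈ X <;> by_cases hy : y ∈ X <;> simp [REq, hx, hy] <;>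
    rintro rfl <;> contradiction

theorem setOf_classes_infinite (hX : Xᶜ.Infinite) :
    {C : Set ℕ | ∃ x, C = {y | REq X x y}}.Infinite := by
  refine Set.infinite_of_injOn_mapsTo (f := fun x => {y | REq X x y}) ?_ (fun x _ => ⟨x, rfl⟩) hX
  intro x hx y _ hxy
  have : REq X x y := (congrArg (y ∈ ·) hxy).mpr (Or.inr rfl)
  exact this.resolve_left fun h => hx h.1

theorem le_zc_of_reduction {f : ℕ → ℕ} (hf : ∀ x y, x = y ↔ REq X (f x) (f y)) {N s : ℕ}
    (hs : ∀ j ≤ N, f j ≤ s) : N ≤ zc X s := by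
  have hinj : f.Injective := fun x y h => (hf x y).2 (Or.inr h)
  have hfin : ∀ p : ℕ → Prop, {j | j ≤ N ∧ p j}.Finite := fun p =>
    (Set.finite_Iic N).subset fun j hj => hj.1
  have hbad : {j | j ≤ N ∧ f j ∈ X}.ncard ≤ 1 :=
    (Set.ncard_le_one_iff (hfin _)).2 fun ha hb => (hf _ _).2 (Or.inl ⟨ha.2, hb.2⟩)
  have hgood : N ≤ {j | j ≤ N ∧ f j ∉ X}.ncard := by
    have hcover : Set.Iic N = {j | j ≤ N ∧ f j ∉ X} ∪ {j | j ≤ N ∧ f j ∈ X} := by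
      ext j; by_cases hj : f j ∈ X <;> simp [hj]
    have := Set.ncard_union_le {j | j ≤ N ∧ f j ∉ X} {j | j ≤ N ∧ f j ∈ X}
    rw [← hcover, Set.ncard_Iic_nat] at this
    omega
  exact hgood.trans <| Set.ncard_le_ncard_of_injOn f (fun j hj => ⟨hs j hj.1, hj.2⟩)
    hinj.injOn ((Set.finite_Iic s).subset fun k hk => hk.1)

end REq

theorem zc_compl_range_le {g : ℕ → ℕ} (hg : StrictMono g) {m s : ℕ} (hs : s < g (m + 1)) :
    zc (Set.range g)ᶜ s ≤ m + 1 := by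
  have hsub : {k | k ≤ s ∧ k ∉ (Set.range g)ᶜ} ⊆ g '' Set.Iic m := by
    rintro k ⟨hk, hmem⟩
    obtain ⟨n, rfl⟩ := not_not.mp hmem
    exact ⟨n, Nat.lt_succ_iff.mp (hg.lt_iff_lt.mp (hk.trans_lt hs)), rfl⟩
  calc zc (Set.range g)ᶜ s ≤ (g '' Set.Iic m).ncard :=
        Set.ncard_le_ncard hsub ((Set.finite_Iic m).image g)
    _ ≤ (Set.Iic m).ncard := Set.ncard_image_le (Set.finite_Iic m)
    _ = m + 1 := Set.ncard_Iic_nat m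

theorem not_prRed_eq_REq_compl_range_ack_diag :
    ¬ PrRed (· = ·) (REq (Set.range fun n => ack n n)ᶜ) := by
  rintro ⟨f, hf, hred⟩
  obtain ⟨m, hm⟩ := exists_lt_ack_of_nat_primrec (Primrec.nat_iff.mp hf)
  have hbound : ∀ j ≤ m + 2, f j ≤ ack (m + 1) (m + 1) - 1 := fun j hj =>
    Nat.le_sub_one_of_lt <| calc
      f j < ack m j := hm j
      _ ≤ ack m (m + 2) := ack_mono_right m hj
      _ ≤ ack (m + 1) (m + 1) := ack_succ_right_le_ack_succ_left m (m + 1)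
  have := (REq.le_zc_of_reduction hred hbound).trans
    (zc_compl_range_le ack_diag_strictMono (Nat.sub_one_lt (ack_pos _ _).ne'))
  omega

theorem stmt_5 :
    ∃ R : ℕ → ℕ → Prop, Equivalence R ∧
      (∃ g : ℕ → ℕ → Bool, Primrec₂ g ∧ ∀ x y, R x y ↔ g x y = true) ∧
      {C : Set ℕ | ∃ x, C = {y | R x y}}.Infinite ∧
      PrRed R (fun a b : ℕ => a = b) ∧ ¬ PrRed (fun a b : ℕ => a = b) R := by
  classical
  have hX : PrimrecPred (· ∈ (Set.range fun n => ack n n)ᶜ) := primrecPred_mem_range_ack_diag.not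
  refine ⟨REq (Set.range fun n => ack n n)ᶜ, REq.equivalence _,
    ⟨_, (REq.primrecRel hX).decide, fun x y => decide_eq_true_iff.symm⟩,
    REq.setOf_classes_infinite ?_, REq.prRed_eq hX, not_prRed_eq_REq_compl_range_ack_diag⟩
  rw [compl_compl]
  exact Set.infinite_range_of_injective ack_diag_strictMono.injective
end

section
/- Let X and Y be coinfinite primitive recursive subsets of ℕ. Then R_X ≤_pr R_Y if and only if there exists a primitive recursive function h such that for all s, #(0^X)[s] ≤ #(0^Y)[h(s)], where #(0^Z)[s] denotes the number of elements of the complement of Z that are ≤ s. -/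
/-!
A reduction `f` of `R_X` to `R_Y` sends the points `k ≤ s` outside `X`, together with `s + 1`,
to pairwise `R_Y`-inequivalent points, at most one of which lies in `Y`; hence at least
`#(0^X)[s]` points outside `Y` lie below `max_{k ≤ s + 1} f k`, a primitive recursive bound.
Conversely, collapse `X` to a point of `Y` and send the `n`-th point outside `X` to the `n`-th
point outside `Y`: the hypothesis on `h` says that this point is found by a search below
`h x + 1`. If `Y` is empty, `R_Y` is equality and counting the complement of `X` suffices.
-/

open Finset Nat

theorem Primrec.nat_count {p : ℕ → Prop} [DecidablePred p] (hp : PrimrecPred p) :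
    Primrec (count p) :=
  (list_length.comp ((listFilter hp).comp list_range)).of_eq fun n => by
    simp [count, List.countP_eq_length_filter]

theorem Nat.nth_eq_getD_filter_range {p : ℕ → Prop} [DecidablePred p] {i n : ℕ}
    (hi : i < count p n) : nth p i = ((List.range n).filter (p ·)).getD i 0 := by
  induction n with
  | zero => simp at hi
  | succ n ih =>
    have hlen : ((List.range n).filter (p ·)).length = count p n := by
      simp [count, List.countP_eq_length_filter]
    rw [List.range_succ, List.filter_append]
    rcases lt_or_ge i (count p n) with hin | hin
    · rw [List.getD_append _ _ _ _ (hlen ▸ hin), ih hin]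
    · have hpn : p n := by
        by_contra hpn
        rw [count_succ, if_neg hpn] at hi
        omega
      rw [count_succ, if_pos hpn] at hi
      obtain rfl : i = count p n := by omega
      simp [hlen, hpn, nth_count hpn]

theorem Primrec.exists_eq_nth_of_lt_count {α : Type*} [Primcodable α] {p : ℕ → Prop}
    [DecidablePred p] (hp : PrimrecPred p) {B i : α → ℕ} (hB : Primrec B) (hi : Primrec i) :
    ∃ g : α → ℕ, Primrec g ∧ ∀ a, i a < count p (B a) → g a = nth p (i a) :=
  ⟨fun a => ((List.range (B a)).filter (p ·)).getD (i a) 0,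
    (list_getD 0).comp ((listFilter hp).comp (list_range.comp hB)) hi,
    fun _ ha => (nth_eq_getD_filter_range ha).symm⟩

theorem Primrec.exists_bound_on_Iic {f : ℕ → ℕ} (hf : Primrec f) :
    ∃ H : ℕ → ℕ, Primrec H ∧ ∀ s, ∀ k ≤ s, f k ≤ H s := by
  refine ⟨fun s => ∑ k ∈ range (s + 1), f k, ?_, fun s k hk =>
    single_le_sum (fun _ _ => Nat.zero_le _) (mem_range.2 (Nat.lt_succ_of_le hk))⟩
  refine (nat_rec₁ (f 0) (nat_add.comp snd (hf.comp (succ.comp fst))).to₂).of_eq fun s => ?_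
  induction s with
  | zero => simp
  | succ s ih => rw [sum_range_succ, ← ih]

theorem zc_eq_count (X : Set ℕ) [DecidablePred (· ∈ X)] (s : ℕ) :
    zc X s = count (· ∉ X) (s + 1) := by
  rw [count_eq_card_filter_range, zc, ← Set.ncard_coe_finset]
  congr 1
  ext k
  simp

theorem PRSet.primrecPred {X : Set ℕ} (hX : PRSet X) : PrimrecPred (· ∈ X) := by
  obtain ⟨g, hg, hgX⟩ := hX
  exact (Primrec.eq.comp hg (Primrec.const true)).of_eq fun n => (hgX n).symm

theorem REq.symm {X : Set ℕ} {x y : ℕ} : REq X x y → REq X y x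
  | .inl ⟨hx, hy⟩ => .inl ⟨hy, hx⟩
  | .inr hxy => .inr hxy.symm

theorem REq_iff_REq_of_mapsTo_compl {X Y : Set ℕ} {f : ℕ → ℕ} {b : ℕ}
    (hfX : ∀ x ∈ X, f x = b) (hmaps : Set.MapsTo f Xᶜ Yᶜ) (hinj : Set.InjOn f Xᶜ)
    (hb : b ∈ Y ∨ b ∉ f '' Xᶜ) (x y : ℕ) : REq X x y ↔ REq Y (f x) (f y) := by
  have hsep : ∀ x ∈ X, ∀ y ∉ X, ¬REq Y (f x) (f y) := by
    rintro x hx y hy (⟨-, hfy⟩ | hxy)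
    · exact hmaps hy hfy
    · rw [hfX x hx] at hxy
      rcases hb with hb | hb
      · exact hmaps hy (hxy ▸ hb)
      · exact hb ⟨y, hy, hxy.symm⟩
  constructor
  · rintro (⟨hx, hy⟩ | rfl)
    · exact .inr ((hfX x hx).trans (hfX y hy).symm)
    · exact .inr rfl
  · intro hR
    by_cases hx : x ∈ X <;> by_cases hy : y ∈ X
    · exact .inl ⟨hx, hy⟩
    · exact absurd hR (hsep x hx y hy)
    · exact absurd hR.symm (hsep y hy x hx)
    · rcases hR with ⟨hfx, -⟩ | hxy
      · exact absurd hfx (hmaps hx)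
      · exact .inr (hinj hx hy hxy)

theorem card_le_card_filter_notMem_add_one {Y : Set ℕ} [DecidablePred (· ∈ Y)] {B : Finset ℕ}
    (hB : (B : Set ℕ).Pairwise fun a b => ¬REq Y a b) : #B ≤ #{b ∈ B | b ∉ Y} + 1 := by
  have hY : #{b ∈ B | b ∈ Y} ≤ 1 := card_le_one.2 fun a ha b hb => by
    rw [mem_filter] at ha hb
    by_contra hab
    exact hB ha.1 hb.1 hab (.inl ⟨ha.2, hb.2⟩)
  have := card_filter_add_card_filter_not (s := B) (· ∈ Y)
  omega

theorem zc_le_zc_of_REq_iff {X Y : Set ℕ} {f : ℕ → ℕ}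
    (hf : ∀ x y, REq X x y ↔ REq Y (f x) (f y)) {s H : ℕ} (hH : ∀ k ≤ s + 1, f k ≤ H) :
    zc X s ≤ zc Y H := by
  classical
  set A := insert (s + 1) {k ∈ range (s + 1) | k ∉ X}
  have hA : (A : Set ℕ).Pairwise fun a b => ¬REq X a b := by
    rintro a ha b hb hab (⟨haX, hbX⟩ | rfl)
    · simp only [A, coe_insert, coe_filter, Set.mem_insert_iff, Set.mem_ofPred_eq] at ha hb
      exact hab ((ha.resolve_right fun h => h.2 haX).trans (hb.resolve_right fun h => h.2 hbX).symm)
    · exact hab rfl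
  have hinj : Set.InjOn f A := fun a ha b hb hfab => by
    by_contra hab
    exact hA ha hb hab ((hf a b).2 (.inr hfab))
  have hfA : ((A.image f : Finset ℕ) : Set ℕ).Pairwise fun a b => ¬REq Y a b := by
    rw [coe_image, hinj.pairwise_image]
    exact fun a ha b hb hab hR => hA ha hb hab ((hf a b).2 hR)
  have hbound : {b ∈ A.image f | b ∉ Y} ⊆ {k ∈ range (H + 1) | k ∉ Y} := by
    intro b hb
    simp only [A, mem_filter, mem_image, mem_insert, mem_range] at hb ⊢
    obtain ⟨⟨k, hk, rfl⟩, hbY⟩ := hb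
    exact ⟨Nat.lt_succ_of_le (hH k (by omega)), hbY⟩
  have hcardA : #A = zc X s + 1 := by
    rw [card_insert_of_notMem (by simp), zc_eq_count, count_eq_card_filter_range]
  suffices zc X s + 1 ≤ zc Y H + 1 by omega
  calc zc X s + 1 = #(A.image f) := by rw [Finset.card_image_of_injOn hinj, hcardA]
    _ ≤ #{b ∈ A.image f | b ∉ Y} + 1 := card_le_card_filter_notMem_add_one hfA
    _ ≤ zc Y H + 1 := by
      rw [zc_eq_count, count_eq_card_filter_range]
      exact Nat.add_le_add_right (card_le_card hbound) 1

theorem PrRed.exists_primrec_zc_le {X Y : Set ℕ} (hred : PrRed (REq X) (REq Y)) :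
    ∃ h : ℕ → ℕ, Primrec h ∧ ∀ s, zc X s ≤ zc Y (h s) := by
  obtain ⟨f, hf, hfXY⟩ := hred
  obtain ⟨H, hH, hfH⟩ := hf.exists_bound_on_Iic
  exact ⟨fun s => H (s + 1), hH.comp .succ, fun s => zc_le_zc_of_REq_iff hfXY (hfH (s + 1))⟩

theorem prRed_REq_empty {X : Set ℕ} (hX : PRSet X) : PrRed (REq X) (REq ∅) := by
  classical
  refine ⟨fun x => if x ∈ X then 0 else count (· ∉ X) x + 1,
    .ite hX.primrecPred (.const 0) (Primrec.succ.comp (.nat_count hX.primrecPred.not)),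
    REq_iff_REq_of_mapsTo_compl (fun x hx => if_pos hx) (fun _ _ => id) ?_ (.inr ?_)⟩
  · intro x hx y hy hxy
    simp only [if_neg (show x ∉ X from hx), if_neg (show y ∉ X from hy)] at hxy
    exact count_injective hx hy (Nat.succ_injective hxy)
  · rintro ⟨x, hx, hx0⟩
    simp [if_neg (show x ∉ X from hx)] at hx0

theorem prRed_REq_of_zc_le {X Y : Set ℕ} (hX : PRSet X) (hY : PRSet Y) (hYc : Yᶜ.Infinite)
    {b : ℕ} (hb : b ∈ Y) {h : ℕ → ℕ} (hh : Primrec h) (hXY : ∀ s, zc X s ≤ zc Y (h s)) :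
    PrRed (REq X) (REq Y) := by
  classical
  obtain ⟨g, hg, hgnth⟩ := Primrec.exists_eq_nth_of_lt_count hY.primrecPred.not
    (Primrec.succ.comp hh) (.nat_count hX.primrecPred.not)
  have hgXc : ∀ x ∉ X, g x = nth (· ∉ Y) (count (· ∉ X) x) := fun x hx => hgnth x <|
    calc count (· ∉ X) x < count (· ∉ X) (x + 1) := count_lt_count_succ_iff.2 hx
      _ = zc X x := (zc_eq_count X x).symm
      _ ≤ zc Y (h x) := hXY x
      _ = count (· ∉ Y) (h x + 1) := zc_eq_count Y (h x)
  refine ⟨fun x => if x ∈ X then b else g x, .ite hX.primrecPred (.const b) hg,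
    REq_iff_REq_of_mapsTo_compl (fun x hx => if_pos hx) ?_ ?_ (.inl hb)⟩
  · intro x hx
    simp only [if_neg (show x ∉ X from hx), hgXc x hx]
    exact nth_mem_of_infinite hYc _
  · intro x hx y hy hxy
    simp only [if_neg (show x ∉ X from hx), if_neg (show y ∉ X from hy), hgXc x hx,
      hgXc y hy] at hxy
    exact count_injective hx hy (nth_injective hYc hxy)

theorem stmt_6_general (X Y : Set ℕ) (hX : PRSet X) (hY : PRSet Y)
    (hYc : Yᶜ.Infinite) :
    PrRed (REq X) (REq Y) ↔
      ∃ h : ℕ → ℕ, Primrec h ∧ ∀ s, zc X s ≤ zc Y (h s) := by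
  refine ⟨PrRed.exists_primrec_zc_le, fun ⟨h, hh, hXY⟩ => ?_⟩
  rcases Y.eq_empty_or_nonempty with rfl | ⟨b, hb⟩
  · exact prRed_REq_empty hX
  · exact prRed_REq_of_zc_le hX hY hYc hb hh hXY

theorem stmt_6 (X Y : Set ℕ) (hX : PRSet X) (hY : PRSet Y)
    (hXc : Xᶜ.Infinite) (hYc : Yᶜ.Infinite) :
    PrRed (REq X) (REq Y) ↔
      ∃ h : ℕ → ℕ, Primrec h ∧ ∀ s, zc X s ≤ zc Y (h s) :=
  stmt_6_general X Y hX hY hYc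
end
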